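/- arXiv:2312.08333 — 3 statements merged into one kernel-verified Lean document; each statement's English description precedes it below -/
import Mathlib

section
/- Let 0 < c < 1 and let f(x) = x^c. Define e_n = χ(n^c) where χ(x) = +1 if {x} < 1/2 and −1 otherwise. Then the correlation measure of order 2 satisfies C_2(E_N) ≫ N; in fact |∑_{n=1}^{N−1} χ(n^c)·χ((n+1)^c)| ≥ δN for some constant δ > 0 and all sufficiently large N. -/
open Finset

noncomputable def chi (x : ℝ) : ℝ := if Int.fract x < 1/2 then 1 else -1

lemma fract_lt_half_iff (x : ℝ) : Int.fract x < 1/2 ↔ Even ⌊2*x⌋ := by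
  have hx : (2:ℝ)*x = (2*⌊x⌋ : ℤ) + 2 * Int.fract x := by
    push_cast [Int.fract]; ring
  have h2 : ⌊2*x⌋ = 2*⌊x⌋ + ⌊2 * Int.fract x⌋ := by
    rw [hx, Int.floor_intCast_add]
  have hf0 := Int.fract_nonneg x
  have hf1 := Int.fract_lt_one x
  by_cases h : Int.fract x < 1/2
  · have h0 : ⌊2 * Int.fract x⌋ = 0 := by
      rw [Int.floor_eq_zero_iff, Set.mem_Ico]
      refine ⟨by linarith, by linarith⟩
    simp only [h, true_iff, h2, h0, add_zero]
    exact ⟨⌊x⌋, by ring⟩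
  · have h1 : ⌊2 * Int.fract x⌋ = 1 := by
      have : ((1:ℤ):ℝ) ≤ 2 * Int.fract x ∧ 2 * Int.fract x < (1:ℤ) + 1 := by
        push_cast; constructor <;> linarith
      exact (Int.floor_eq_iff).2 this
    rw [h2, h1]
    simp only [h, iff_false]
    simp [Int.even_add_one, parity_simps]

lemma chi_eq (x : ℝ) : chi x = if Even ⌊2*x⌋ then 1 else -1 := by
  unfold chi
  by_cases h : Int.fract x < 1/2
  · rw [if_pos h, if_pos ((fract_lt_half_iff x).1 h)]
  · rw [if_neg h, if_neg (fun he => h ((fract_lt_half_iff x).2 he))]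

lemma chi_sq (x : ℝ) : chi x * chi x = 1 := by
  unfold chi; split <;> norm_num

lemma chi_congr (x y : ℝ) (h : ⌊2*x⌋ = ⌊2*y⌋) : chi x = chi y := by
  rw [chi_eq, chi_eq, h]

lemma chi_pm (x : ℝ) : chi x = 1 ∨ chi x = -1 := by
  unfold chi; split <;> simp

theorem stmt_5 (c : ℝ) (hc0 : 0 < c) (hc1 : c < 1) :
    ∃ δ : ℝ, 0 < δ ∧ ∃ N₀ : ℕ, ∀ N : ℕ, N₀ ≤ N →
      δ * N ≤ |∑ n ∈ Finset.Icc 1 (N - 1),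
        chi ((n : ℝ) ^ c) * chi (((n : ℝ) + 1) ^ c)| := by
  -- eventual bound 4 * N^c ≤ (3/4) N
  have h1 : Filter.Tendsto (fun x : ℝ => x ^ (c - 1)) Filter.atTop (nhds 0) := by
    have := tendsto_rpow_neg_atTop (show (0:ℝ) < 1 - c by linarith)
    simpa [neg_sub] using this
  have h2 : Filter.Tendsto (fun N : ℕ => (N:ℝ) ^ (c - 1)) Filter.atTop (nhds 0) :=
    h1.comp tendsto_natCast_atTop_atTop
  have hev : ∀ᶠ N : ℕ in Filter.atTop, 4 * (N:ℝ) ^ c ≤ (3/4) * N := by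
    filter_upwards [h2.eventually (eventually_le_nhds (show (0:ℝ) < 3/16 by norm_num)),
      Filter.eventually_ge_atTop 1] with N hle hN1
    have hNpos : (0:ℝ) < N := by exact_mod_cast hN1
    have hsplit : (N:ℝ) ^ c = (N:ℝ) ^ (c - 1) * N := by
      nth_rewrite 1 [show c = (c-1)+1 by ring]
      rw [Real.rpow_add hNpos, Real.rpow_one]
    rw [hsplit]
    nlinarith [Real.rpow_nonneg (le_of_lt hNpos) (c-1)]
  obtain ⟨N₁, hN₁⟩ := Filter.eventually_atTop.mp hev
  refine ⟨1/4, by norm_num, max N₁ 1, fun N hN => ?_⟩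
  have hN1 : 1 ≤ N := le_trans (le_max_right _ _) hN
  have h4 : 4 * (N:ℝ) ^ c ≤ (3/4) * N := hN₁ N (le_trans (le_max_left _ _) hN)
  set a : ℕ → ℤ := fun n => ⌊2 * (n:ℝ) ^ c⌋ with ha
  have hmono : Monotone a := by
    intro n m h
    apply Int.floor_le_floor
    have : (n:ℝ) ^ c ≤ (m:ℝ) ^ c :=
      Real.rpow_le_rpow (Nat.cast_nonneg n) (by exact_mod_cast h) (le_of_lt hc0)
    linarith
  set S := Finset.Icc 1 (N - 1) with hS
  set bad := S.filter (fun n => a n ≠ a (n + 1)) with hbad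
  -- pointwise bound
  have hterm : ∀ n ∈ S, (1 - 2 * (if a n ≠ a (n+1) then (1:ℝ) else 0)) ≤
      chi ((n : ℝ) ^ c) * chi (((n : ℝ) + 1) ^ c) := by
    intro n _
    by_cases h : a n = a (n + 1)
    · have hcast : ((n+1:ℕ):ℝ) = (n:ℝ) + 1 := by push_cast; ring
      have := chi_congr ((n : ℝ) ^ c) (((n : ℝ) + 1) ^ c)
        (by rw [← hcast]; exact h)
      rw [this, chi_sq]
      simp [h]
    · rcases chi_pm ((n : ℝ) ^ c) with h1' | h1' <;>
        rcases chi_pm (((n : ℝ) + 1) ^ c) with h2' | h2' <;>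
        simp [h, h1', h2'] <;> norm_num
  have hsum1 : (S.card : ℝ) - 2 * bad.card ≤
      ∑ n ∈ S, chi ((n : ℝ) ^ c) * chi (((n : ℝ) + 1) ^ c) := by
    calc (S.card : ℝ) - 2 * bad.card
        = ∑ n ∈ S, (1 - 2 * (if a n ≠ a (n+1) then (1:ℝ) else 0)) := by
          rw [Finset.sum_sub_distrib, Finset.sum_const, ← Finset.mul_sum,
            Finset.sum_boole, hbad]
          simp
      _ ≤ _ := Finset.sum_le_sum hterm
  -- card bad bound via telescoping
  have hIco : S = Finset.Ico 1 N := by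
    rw [hS, ← Finset.Ico_add_one_right_eq_Icc]
    congr 1
    omega
  have htel : ∑ n ∈ S, (a (n+1) - a n) = a N - a 1 := by
    rw [hIco, Finset.sum_Ico_eq_sub _ hN1, Finset.sum_range_sub, Finset.sum_range_sub]
    ring
  have hbadcard : (bad.card : ℤ) ≤ a N - a 1 := by
    rw [← htel]
    calc (bad.card : ℤ) = ∑ _n ∈ bad, 1 := by simp
      _ ≤ ∑ n ∈ bad, (a (n+1) - a n) := by
          apply Finset.sum_le_sum
          intro n hn
          have := (Finset.mem_filter.mp hn).2
          have hm := hmono (Nat.le_add_right n 1)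
          omega
      _ ≤ ∑ n ∈ S, (a (n+1) - a n) := by
          apply Finset.sum_le_sum_of_subset_of_nonneg (Finset.filter_subset _ _)
          intro n _ _
          have hm := hmono (Nat.le_add_right n 1)
          omega
  have ha1 : a 1 = 2 := by
    simp only [ha, Nat.cast_one, Real.one_rpow, mul_one]
    norm_num
  have haN : (a N : ℝ) ≤ 2 * (N:ℝ) ^ c := Int.floor_le _
  have hbadR : (bad.card : ℝ) ≤ 2 * (N:ℝ) ^ c - 2 := by
    have : ((bad.card : ℤ) : ℝ) ≤ ((a N - a 1 : ℤ) : ℝ) := by exact_mod_cast hbadcard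
    push_cast [ha1] at this
    linarith
  have hcardS : (S.card : ℝ) = (N:ℝ) - 1 := by
    rw [hS, Nat.card_Icc]
    have : N - 1 + 1 - 1 = N - 1 := by omega
    rw [this, Nat.cast_sub hN1]
    norm_num
  have habs : ∑ n ∈ S, chi ((n : ℝ) ^ c) * chi (((n : ℝ) + 1) ^ c) ≤
      |∑ n ∈ S, chi ((n : ℝ) ^ c) * chi (((n : ℝ) + 1) ^ c)| := le_abs_self _
  rw [hS] at hsum1 habs ⊢
  linarith
end

section
/- Let s ≥ 2, e_1,…,e_N ∈ {−1,+1} with e_n = χ(f(n)) for a real function f, and let 0 ≤ d_1 < ⋯ < d_s, M + d_s ≤ N. Setting x_n = (f(n+d_1),…,f(n+d_s)) ∈ ℝ^s for 1 ≤ n ≤ M, we have |∑_{n=1}^M e_{n+d_1}⋯e_{n+d_s}| ≤ 2^s · M · D_M(x_1,…,x_M), where D_M denotes the s-dimensional discrepancy. -/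
open Finset

noncomputable def sgnB (b : Bool) : ℝ := if b then -1 else 1
noncomputable def loB (b : Bool) : ℝ := if b then 1/2 else 0
noncomputable def hiB (b : Bool) : ℝ := if b then 1 else 1/2

lemma sgnB_true : sgnB true = -1 := rfl
lemma sgnB_false : sgnB false = 1 := rfl
lemma loB_true : loB true = 1/2 := rfl
lemma loB_false : loB false = 0 := rfl
lemma hiB_true : hiB true = 1 := rfl
lemma hiB_false : hiB false = 1/2 := rfl

lemma chi_eq_s10 (x : ℝ) : chi x = ∑ b : Bool,
    sgnB b * (if Int.fract x ∈ Set.Ico (loB b) (hiB b) then (1:ℝ) else 0) := by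
  have h0 := Int.fract_nonneg x
  have h1 := Int.fract_lt_one x
  rw [Fintype.sum_bool, sgnB_true, sgnB_false, loB_true, loB_false, hiB_true, hiB_false, chi]
  simp only [Set.mem_Ico]
  by_cases h : Int.fract x < 1/2
  · rw [if_pos h, if_neg (by rintro ⟨hc, -⟩; linarith), if_pos ⟨h0, h⟩]
    ring
  · push_neg at h
    rw [if_neg (not_lt.2 h), if_pos ⟨h, h1⟩, if_neg (by rintro ⟨-, hc⟩; linarith)]
    ring

lemma sum_sgn_zero {s : ℕ} (hs : s ≠ 0) :
    ∑ ε ∈ Fintype.piFinset (fun _ : Fin s => (Finset.univ : Finset Bool)),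
      ∏ j, sgnB (ε j) = 0 := by
  rw [← Finset.prod_univ_sum]
  have h2 : sgnB true + sgnB false = 0 := by rw [sgnB_true, sgnB_false]; ring
  simp only [Fintype.sum_bool, h2]
  simp [hs]

theorem stmt_10 (N s : ℕ) (hs : 2 ≤ s) (f : ℕ → ℝ)
    (d : Fin s → ℕ) (hd : StrictMono d) (M : ℕ) (hM : 1 ≤ M)
    (hMN : M + d ⟨s - 1, by omega⟩ ≤ N) (D : ℝ)
    (hD : D = sSup {r : ℝ | ∃ a b : Fin s → ℝ,
      (∀ j, 0 ≤ a j ∧ a j ≤ b j ∧ b j ≤ 1) ∧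
      r = |(1 / (M : ℝ)) *
        ((Finset.Icc 1 M).filter
          (fun n => ∀ j, Int.fract (f (n + d j)) ∈ Set.Ico (a j) (b j))).card
        - ∏ j, (b j - a j)|}) :
    |∑ n ∈ Finset.Icc 1 M, ∏ j, chi (f (n + d j))| ≤ 2 ^ s * M * D := by
  have hMpos : (0:ℝ) < M := by exact_mod_cast hM
  set Sset := {r : ℝ | ∃ a b : Fin s → ℝ,
      (∀ j, 0 ≤ a j ∧ a j ≤ b j ∧ b j ≤ 1) ∧
      r = |(1 / (M : ℝ)) *
        ((Finset.Icc 1 M).filter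
          (fun n => ∀ j, Int.fract (f (n + d j)) ∈ Set.Ico (a j) (b j))).card
        - ∏ j, (b j - a j)|} with hSset
  -- bounded above
  have hbdd : BddAbove Sset := by
    refine ⟨2, ?_⟩
    rintro r ⟨a, b, hab, rfl⟩
    have hcard : (((Finset.Icc 1 M).filter
        (fun n => ∀ j, Int.fract (f (n + d j)) ∈ Set.Ico (a j) (b j))).card : ℝ) ≤ M := by
      have := Finset.card_filter_le (Finset.Icc 1 M)
        (fun n => ∀ j, Int.fract (f (n + d j)) ∈ Set.Ico (a j) (b j))
      have h2 : (Finset.Icc 1 M).card = M := by simp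
      exact_mod_cast h2 ▸ this
    have hprod0 : 0 ≤ ∏ j, (b j - a j) :=
      Finset.prod_nonneg fun j _ => by linarith [(hab j).1, (hab j).2.1]
    have hprod1 : ∏ j, (b j - a j) ≤ 1 :=
      Finset.prod_le_one (fun j _ => by linarith [(hab j).1, (hab j).2.1])
        (fun j _ => by linarith [(hab j).1, (hab j).2.1, (hab j).2.2])
    have hq : 0 ≤ (1 / (M:ℝ)) * (((Finset.Icc 1 M).filter
        (fun n => ∀ j, Int.fract (f (n + d j)) ∈ Set.Ico (a j) (b j))).card : ℝ) := by
      positivity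
    have hq1 : (1 / (M:ℝ)) * (((Finset.Icc 1 M).filter
        (fun n => ∀ j, Int.fract (f (n + d j)) ∈ Set.Ico (a j) (b j))).card : ℝ) ≤ 1 := by
      rw [div_mul_eq_mul_div, div_le_one hMpos]; linarith
    rw [abs_sub_le_iff]; constructor <;> linarith
  -- per-box bound
  have hbox : ∀ ε : Fin s → Bool,
      |((((Finset.Icc 1 M).filter (fun n => ∀ j,
          Int.fract (f (n + d j)) ∈ Set.Ico (loB (ε j)) (hiB (ε j)))).card : ℝ)
        - M * (1/2)^s)| ≤ M * D := by
    intro ε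
    set c : ℝ := (((Finset.Icc 1 M).filter (fun n => ∀ j,
        Int.fract (f (n + d j)) ∈ Set.Ico (loB (ε j)) (hiB (ε j)))).card : ℝ)
    have hmem : |(1 / (M:ℝ)) * c - (1/2)^s| ∈ Sset := by
      refine ⟨fun j => loB (ε j), fun j => hiB (ε j), ?_, ?_⟩
      · intro j; cases h : ε j <;> simp [loB, hiB, h] <;> norm_num
      · have : ∏ j : Fin s, (hiB (ε j) - loB (ε j)) = (1/2)^s := by
          have : ∀ j : Fin s, hiB (ε j) - loB (ε j) = 1/2 := by
            intro j; cases h : ε j <;> simp [loB, hiB, h] <;> norm_num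
          simp [this]
        rw [this]
    have hle : |(1 / (M:ℝ)) * c - (1/2)^s| ≤ D := hD ▸ le_csSup hbdd hmem
    have heq : c - M * (1/2)^s = M * ((1 / (M:ℝ)) * c - (1/2)^s) := by
      field_simp
    rw [heq, abs_mul, abs_of_pos hMpos]
    exact mul_le_mul_of_nonneg_left hle hMpos.le
  -- main identity
  have key : ∑ n ∈ Finset.Icc 1 M, ∏ j, chi (f (n + d j))
      = ∑ ε ∈ Fintype.piFinset (fun _ : Fin s => (Finset.univ : Finset Bool)),
        (∏ j, sgnB (ε j)) *
          ((((Finset.Icc 1 M).filter (fun n => ∀ j,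
            Int.fract (f (n + d j)) ∈ Set.Ico (loB (ε j)) (hiB (ε j)))).card : ℝ)
            - M * (1/2)^s) := by
    have step1 : ∑ n ∈ Finset.Icc 1 M, ∏ j, chi (f (n + d j))
        = ∑ ε ∈ Fintype.piFinset (fun _ : Fin s => (Finset.univ : Finset Bool)),
          (∏ j, sgnB (ε j)) *
            (((Finset.Icc 1 M).filter (fun n => ∀ j,
              Int.fract (f (n + d j)) ∈ Set.Ico (loB (ε j)) (hiB (ε j)))).card : ℝ) := by
      have h1 : ∀ n, ∏ j, chi (f (n + d j))
          = ∑ ε ∈ Fintype.piFinset (fun _ : Fin s => (Finset.univ : Finset Bool)),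
            (∏ j, sgnB (ε j)) *
              (if (∀ j, Int.fract (f (n + d j)) ∈ Set.Ico (loB (ε j)) (hiB (ε j)))
                then (1:ℝ) else 0) := by
        intro n
        calc ∏ j, chi (f (n + d j))
            = ∏ j, ∑ b : Bool, sgnB b *
              (if Int.fract (f (n + d j)) ∈ Set.Ico (loB b) (hiB b) then (1:ℝ) else 0) := by
              simp_rw [chi_eq_s10]
          _ = ∑ ε ∈ Fintype.piFinset (fun _ : Fin s => (Finset.univ : Finset Bool)),
              ∏ j, sgnB (ε j) *
              (if Int.fract (f (n + d j)) ∈ Set.Ico (loB (ε j)) (hiB (ε j)) then (1:ℝ) else 0) :=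
              Finset.prod_univ_sum _ _
          _ = _ := by
              refine Finset.sum_congr rfl fun ε _ => ?_
              rw [Finset.prod_mul_distrib]
              congr 1
              rw [Finset.prod_boole]
              simp
      simp_rw [h1]
      rw [Finset.sum_comm]
      refine Finset.sum_congr rfl fun ε _ => ?_
      rw [← Finset.mul_sum, Finset.sum_boole]
    rw [step1]
    have hz := sum_sgn_zero (s := s) (by omega)
    rw [eq_comm]
    simp_rw [mul_sub]
    rw [Finset.sum_sub_distrib]
    have : ∑ ε ∈ Fintype.piFinset (fun _ : Fin s => (Finset.univ : Finset Bool)),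
        (∏ j, sgnB (ε j)) * ((M:ℝ) * (1/2)^s)
        = (∑ ε ∈ Fintype.piFinset (fun _ : Fin s => (Finset.univ : Finset Bool)),
          ∏ j, sgnB (ε j)) * ((M:ℝ) * (1/2)^s) := by
      rw [Finset.sum_mul]
    rw [this, hz, zero_mul, sub_zero]
  rw [key]
  calc |∑ ε ∈ Fintype.piFinset (fun _ : Fin s => (Finset.univ : Finset Bool)),
        (∏ j, sgnB (ε j)) *
          ((((Finset.Icc 1 M).filter (fun n => ∀ j,
            Int.fract (f (n + d j)) ∈ Set.Ico (loB (ε j)) (hiB (ε j)))).card : ℝ)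
            - M * (1/2)^s)|
      ≤ ∑ ε ∈ Fintype.piFinset (fun _ : Fin s => (Finset.univ : Finset Bool)),
        |(∏ j, sgnB (ε j)) *
          ((((Finset.Icc 1 M).filter (fun n => ∀ j,
            Int.fract (f (n + d j)) ∈ Set.Ico (loB (ε j)) (hiB (ε j)))).card : ℝ)
            - M * (1/2)^s)| := Finset.abs_sum_le_sum_abs _ _
    _ ≤ ∑ ε ∈ Fintype.piFinset (fun _ : Fin s => (Finset.univ : Finset Bool)),
        (M : ℝ) * D := by
        refine Finset.sum_le_sum fun ε _ => ?_
        rw [abs_mul]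
        have hsgn : |∏ j, sgnB (ε j)| = 1 := by
          rw [Finset.abs_prod]
          have : ∀ j : Fin s, |sgnB (ε j)| = 1 := by
            intro j; cases h : ε j <;> simp [sgnB]
          simp [this]
        rw [hsgn, one_mul]
        exact hbox ε
    _ = 2 ^ s * M * D := by
        rw [Finset.sum_const, nsmul_eq_mul]
        have : (Fintype.piFinset (fun _ : Fin s => (Finset.univ : Finset Bool))).card = 2 ^ s := by
          simp
        rw [this]; push_cast; ring
end

section
/- Let 0 < c < 1 and let H, Q be positive integers with H = ⌊M^{(1−c)²}/4⌋ and Q = ⌊log(M(4H)^{−1/(1−c)})/log 2⌋. Then for integers h_1, h_2 with |h_1|, |h_2| ≤ H and h_1 + h_2 ≠ 0, and for 0 ≤ q ≤ Q and M/2^{q+1} < x ≤ M/2^q, the derivative g'(x) of g(x) = h_1 x^c + h_2 (x+1)^c satisfies c₁·c·(2^{−q}M)^{c−1} ≤ |g'(x)| ≤ 2Hc(2^{−q−1}M)^{c−1} ≤ 1/2 for some constant c₁ > 0 and all sufficiently large M. -/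
open Finset

set_option maxHeartbeats 1000000 in
theorem stmt_13 (c : ℝ) (hc0 : 0 < c) (hc1 : c < 1) :
    ∃ c₁ : ℝ, 0 < c₁ ∧ ∃ M₀ : ℕ, ∀ M : ℕ, M₀ ≤ M →
      ∀ H Q : ℕ, 1 ≤ H → 1 ≤ Q →
      (H : ℝ) = ⌊(M : ℝ) ^ ((1 - c) ^ 2) / 4⌋ →
      (Q : ℝ) = ⌊Real.log ((M : ℝ) * (4 * (H : ℝ)) ^ (-(1 / (1 - c)))) / Real.log 2⌋ →
      ∀ h₁ h₂ : ℤ, |h₁| ≤ (H : ℤ) → |h₂| ≤ (H : ℤ) → h₁ + h₂ ≠ 0 →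
      ∀ q : ℕ, q ≤ Q → ∀ x : ℝ,
        (M : ℝ) / 2 ^ (q + 1) < x → x ≤ (M : ℝ) / 2 ^ q →
        c₁ * c * ((2 : ℝ) ^ (-(q : ℝ)) * M) ^ (c - 1)
            ≤ |c * h₁ * x ^ (c - 1) + c * h₂ * (x + 1) ^ (c - 1)| ∧
        |c * h₁ * x ^ (c - 1) + c * h₂ * (x + 1) ^ (c - 1)|
            ≤ 2 * H * c * ((2 : ℝ) ^ (-((q : ℝ) + 1)) * M) ^ (c - 1) ∧
        2 * H * c * ((2 : ℝ) ^ (-((q : ℝ) + 1)) * M) ^ (c - 1) ≤ 1 / 2 := by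
  have h1c : (0:ℝ) < 1 - c := by linarith
  set e : ℝ := (1 - c)^2 with he_def
  have he : 0 < e := by positivity
  set R : ℝ := (2:ℝ) ^ ((1-c)/c) + 4 with hR_def
  have hRpos : 0 < R := by positivity
  refine ⟨1/2, by norm_num, ⌈R ^ (1/e)⌉₊ + 1, ?_⟩
  intro M hM H Q hH hQ hHdef hQdef h₁ h₂ hh1 hh2 hsum q hq x hx1 hx2
  have hM1 : 1 ≤ M := le_trans (Nat.le_add_left 1 _) hM
  have hMpos : (0:ℝ) < M := by exact_mod_cast Nat.lt_of_lt_of_le Nat.zero_lt_one hM1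
  -- M^e ≥ R
  have hMe : R ≤ (M:ℝ) ^ e := by
    have h1 : R ^ (1/e) ≤ (M:ℝ) := by
      calc R ^ (1/e) ≤ (⌈R ^ (1/e)⌉₊ : ℝ) := Nat.le_ceil _
        _ ≤ (M:ℝ) := by exact_mod_cast le_trans (Nat.le_succ _) hM
    calc R = (R ^ (1/e)) ^ e := by
          rw [← Real.rpow_mul hRpos.le, one_div_mul_cancel he.ne', Real.rpow_one]
      _ ≤ (M:ℝ) ^ e := Real.rpow_le_rpow (by positivity) h1 he.le
  have hHpos : (0:ℝ) < H := by exact_mod_cast hH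
  have hH1 : (1:ℝ) ≤ H := by exact_mod_cast hH
  have h4H1 : (1:ℝ) ≤ 4 * H := by linarith
  -- 4H ≥ 2^((1-c)/c)
  have hHlb : (2:ℝ) ^ ((1-c)/c) ≤ 4 * H := by
    have hfl : (M:ℝ)^e/4 - 1 < (H:ℝ) := by
      rw [hHdef]; exact_mod_cast Int.sub_one_lt_floor _
    have h2 : (2:ℝ)^((1-c)/c) = R - 4 := by rw [hR_def]; ring
    rw [h2]
    linarith [hMe, hfl]
  -- B = (4H)^(1/(1-c))
  set B : ℝ := (4 * (H:ℝ)) ^ (1/(1-c)) with hB_def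
  have hBpos : 0 < B := by positivity
  have hB8H : 8 * (H:ℝ) ≤ B := by
    have hsplit : (1:ℝ)/(1-c) = 1 + c/(1-c) := by field_simp; ring
    have h2le : (2:ℝ) ≤ (4*(H:ℝ)) ^ (c/(1-c)) := by
      have : ((2:ℝ) ^ ((1-c)/c)) ^ (c/(1-c)) ≤ (4*(H:ℝ)) ^ (c/(1-c)) :=
        Real.rpow_le_rpow (by positivity) hHlb (by positivity)
      calc (2:ℝ) = ((2:ℝ) ^ ((1-c)/c)) ^ (c/(1-c)) := by
            rw [← Real.rpow_mul (by norm_num)]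
            rw [div_mul_div_comm, mul_comm, div_self (by positivity), Real.rpow_one]
        _ ≤ _ := this
    calc 8 * (H:ℝ) = (4*(H:ℝ)) * 2 := by ring
      _ ≤ (4*(H:ℝ)) * (4*(H:ℝ)) ^ (c/(1-c)) := by
          apply mul_le_mul_of_nonneg_left h2le (by positivity)
      _ = B := by
          rw [hB_def, hsplit, Real.rpow_add (by positivity), Real.rpow_one]
  -- A = M / 2^q, B ≤ A
  set A : ℝ := (M:ℝ) / 2^q with hA_def
  have hApos : 0 < A := by positivity
  have hBA : B ≤ A := by
    have hlog2 : (0:ℝ) < Real.log 2 := Real.log_pos one_lt_two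
    have hypos : 0 < (M:ℝ) * (4 * (H:ℝ)) ^ (-(1/(1-c))) := by positivity
    have hlog : (Q:ℝ) * Real.log 2 ≤ Real.log ((M:ℝ) * (4 * (H:ℝ)) ^ (-(1/(1-c)))) := by
      have h1 : (Q:ℝ) ≤ Real.log ((M:ℝ) * (4 * (H:ℝ)) ^ (-(1/(1-c)))) / Real.log 2 := by
        rw [hQdef]; exact Int.floor_le _
      calc (Q:ℝ) * Real.log 2 ≤ (Real.log ((M:ℝ) * (4 * (H:ℝ)) ^ (-(1/(1-c)))) / Real.log 2) * Real.log 2 :=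
            mul_le_mul_of_nonneg_right h1 hlog2.le
        _ = _ := by field_simp
    have h2Q : (2:ℝ)^(Q:ℕ) ≤ (M:ℝ) * (4 * (H:ℝ)) ^ (-(1/(1-c))) := by
      calc (2:ℝ)^(Q:ℕ) = Real.exp ((Q:ℝ) * Real.log 2) := by
            rw [← Real.rpow_natCast 2 Q, Real.rpow_def_of_pos (by norm_num), mul_comm]
        _ ≤ Real.exp (Real.log ((M:ℝ) * (4 * (H:ℝ)) ^ (-(1/(1-c))))) := Real.exp_le_exp.mpr hlog
        _ = _ := Real.exp_log hypos
    have hBinv : (4 * (H:ℝ)) ^ (-(1/(1-c))) = B⁻¹ := by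
      rw [hB_def, ← Real.rpow_neg (by positivity)]
    rw [hBinv] at h2Q
    have h2q2Q : (2:ℝ)^q ≤ (2:ℝ)^(Q:ℕ) := pow_le_pow_right₀ one_le_two hq
    have hMB : B * (2:ℝ)^(Q:ℕ) ≤ M := by
      have := mul_le_mul_of_nonneg_left h2Q hBpos.le
      rwa [mul_comm ((M:ℝ)) _, ← mul_assoc, mul_inv_cancel₀ hBpos.ne', one_mul] at this
    rw [hA_def, le_div_iff₀ (by positivity)]
    calc B * (2:ℝ)^q ≤ B * (2:ℝ)^(Q:ℕ) := mul_le_mul_of_nonneg_left h2q2Q hBpos.le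
      _ ≤ M := hMB
  have hA8H : 8 * (H:ℝ) ≤ A := le_trans hB8H hBA
  -- A^(1-c) ≥ 4H
  have hA1c : 4 * (H:ℝ) ≤ A ^ (1-c) := by
    calc 4 * (H:ℝ) = B ^ (1-c) := by
          rw [hB_def, ← Real.rpow_mul (by positivity), one_div_mul_cancel h1c.ne', Real.rpow_one]
      _ ≤ A ^ (1-c) := Real.rpow_le_rpow hBpos.le hBA h1c.le
  -- x bounds
  have hxA2 : A / 2 < x := by
    rw [hA_def, div_div, ← pow_succ]; exact hx1
  have hxA : x ≤ A := hx2
  have hx0 : 0 < x := lt_trans (by positivity) hxA2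
  set u : ℝ := x ^ (c-1) with hu_def
  set v : ℝ := (x+1) ^ (c-1) with hv_def
  have hupos : 0 < u := Real.rpow_pos_of_pos hx0 _
  have hvpos : 0 < v := Real.rpow_pos_of_pos (by linarith) _
  have hc1' : c - 1 ≤ 0 := by linarith
  have hvu : v ≤ u := Real.rpow_le_rpow_of_nonpos hx0 (by linarith) hc1'
  have huA : A ^ (c-1) ≤ u := Real.rpow_le_rpow_of_nonpos hx0 hxA hc1'
  have hA2pos : 0 < A / 2 := by positivity
  have huA2 : u ≤ (A/2) ^ (c-1) := Real.rpow_le_rpow_of_nonpos hA2pos hxA2.le hc1'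
  have hApow_pos : 0 < A ^ (c-1) := Real.rpow_pos_of_pos hApos _
  -- (A/2)^(c-1) = 2^(1-c) * A^(c-1) ≤ 2 * A^(c-1)
  have hhalf : (A/2) ^ (c-1) = (2:ℝ)^(1-c) * A ^ (c-1) := by
    rw [div_eq_mul_inv, Real.mul_rpow hApos.le (by norm_num), ← Real.rpow_neg_one (2:ℝ),
      ← Real.rpow_mul (by norm_num)]
    ring_nf
  have h2c2 : (2:ℝ)^(1-c) ≤ 2 := by
    calc (2:ℝ)^(1-c) ≤ (2:ℝ)^(1:ℝ) := Real.rpow_le_rpow_of_exponent_le one_le_two (by linarith)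
      _ = 2 := Real.rpow_one 2
  have hhalf2 : (A/2) ^ (c-1) ≤ 2 * A ^ (c-1) := by
    rw [hhalf]; exact mul_le_mul_of_nonneg_right h2c2 hApow_pos.le
  -- error bound : u - v ≤ u / x
  have herr : u - v ≤ u / x := by
    have hxc : x ^ c ≤ (x+1) ^ c := Real.rpow_le_rpow hx0.le (by linarith) hc0.le
    have hx1pos : (0:ℝ) < x + 1 := by linarith
    have hvx : x ^ c / (x+1) ≤ v := by
      rw [hv_def, Real.rpow_sub hx1pos, Real.rpow_one]
      gcongr
    have hux : u * x = x ^ c := by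
      rw [hu_def, ← Real.rpow_add_one hx0.ne']; ring_nf
    rw [← hux] at hvx
    have h5 : u - u * x / (x+1) = u / (x+1) := by field_simp; ring
    have h6 : u / (x+1) ≤ u / x := by gcongr; linarith
    linarith
  -- H * (u - v) ≤ (1/2) * A^(c-1)
  have hkey : (H:ℝ) * (u - v) ≤ (1/2) * A ^ (c-1) := by
    have h1 : (H:ℝ) * (u - v) ≤ (H:ℝ) * (u / x) :=
      mul_le_mul_of_nonneg_left herr hHpos.le
    have h2 : u / x ≤ (2 * A^(c-1)) / (A/2) := by
      apply div_le_div₀ (by positivity) (le_trans huA2 hhalf2) hA2pos hxA2.le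
    have h3 : (2 * A^(c-1)) / (A/2) = 4 * A^(c-1) / A := by ring
    have h4 : 4 * (H:ℝ) / A ≤ 1/2 := by rw [div_le_iff₀ hApos]; linarith
    have h7 : (H:ℝ) * (4 * A^(c-1) / A) = (4 * (H:ℝ) / A) * A^(c-1) := by ring
    calc (H:ℝ) * (u - v) ≤ (H:ℝ) * (u / x) := h1
      _ ≤ (H:ℝ) * (4 * A^(c-1) / A) := by
          apply mul_le_mul_of_nonneg_left (le_trans h2 (le_of_eq h3)) hHpos.le
      _ = (4 * (H:ℝ) / A) * A^(c-1) := h7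
      _ ≤ (1/2) * A^(c-1) := mul_le_mul_of_nonneg_right h4 hApow_pos.le
  -- rewrite goal bases
  have ebase : ((2:ℝ) ^ (-(q:ℝ)) * M) = A := by
    rw [Real.rpow_neg (by norm_num : (0:ℝ) ≤ 2), Real.rpow_natCast, hA_def,
      div_eq_mul_inv, mul_comm]
  have ebase2 : ((2:ℝ) ^ (-((q:ℝ)+1)) * M) = A/2 := by
    have hcast : -((q:ℝ)+1) = -(((q+1:ℕ)):ℝ) := by push_cast; ring
    rw [hcast, Real.rpow_neg (by norm_num : (0:ℝ) ≤ 2), Real.rpow_natCast, hA_def,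
      div_div, ← pow_succ, div_eq_mul_inv, mul_comm]
  rw [ebase, ebase2]
  set X : ℝ := (h₁:ℝ) * u + (h₂:ℝ) * v with hX_def
  have hfact : c * (h₁:ℝ) * u + c * (h₂:ℝ) * v = c * X := by rw [hX_def]; ring
  have habs1 : |(h₁:ℝ)| ≤ (H:ℝ) := by exact_mod_cast hh1
  have habs2 : |(h₂:ℝ)| ≤ (H:ℝ) := by exact_mod_cast hh2
  have hsum1 : (1:ℝ) ≤ |(h₁:ℝ) + (h₂:ℝ)| := by
    have h0 : (1:ℤ) ≤ |h₁ + h₂| := Int.one_le_abs hsum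
    exact_mod_cast h0
  have hXlow : (1/2) * A^(c-1) ≤ |X| := by
    have hY : |((h₁:ℝ)+(h₂:ℝ)) * u| = |(h₁:ℝ)+(h₂:ℝ)| * u := by
      rw [abs_mul, abs_of_pos hupos]
    have h8 : |((h₁:ℝ)+(h₂:ℝ)) * u| - |X| ≤ |((h₁:ℝ)+(h₂:ℝ)) * u - X| :=
      abs_sub_abs_le_abs_sub _ _
    have hd : ((h₁:ℝ)+(h₂:ℝ)) * u - X = (h₂:ℝ) * (u - v) := by rw [hX_def]; ring
    rw [hd, hY] at h8
    have h9 : |(h₂:ℝ) * (u - v)| ≤ (H:ℝ) * (u - v) := by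
      rw [abs_mul, abs_of_nonneg (by linarith : (0:ℝ) ≤ u - v)]
      exact mul_le_mul_of_nonneg_right habs2 (by linarith)
    have h10 : u ≤ |(h₁:ℝ)+(h₂:ℝ)| * u := le_mul_of_one_le_left hupos.le hsum1
    linarith [hkey, huA]
  refine ⟨?_, ?_, ?_⟩
  · rw [hfact, abs_mul, abs_of_pos hc0]
    calc (1:ℝ)/2 * c * A^(c-1) = c * ((1/2) * A^(c-1)) := by ring
      _ ≤ c * |X| := mul_le_mul_of_nonneg_left hXlow hc0.le
  · rw [hfact, abs_mul, abs_of_pos hc0]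
    have hXup : |X| ≤ 2 * (H:ℝ) * (A/2)^(c-1) := by
      calc |X| ≤ |(h₁:ℝ) * u| + |(h₂:ℝ) * v| := abs_add_le _ _
        _ = |(h₁:ℝ)| * u + |(h₂:ℝ)| * v := by
            rw [abs_mul, abs_mul, abs_of_pos hupos, abs_of_pos hvpos]
        _ ≤ (H:ℝ) * u + (H:ℝ) * v :=
            add_le_add (mul_le_mul_of_nonneg_right habs1 hupos.le)
              (mul_le_mul_of_nonneg_right habs2 hvpos.le)
        _ ≤ (H:ℝ) * u + (H:ℝ) * u :=
            add_le_add le_rfl (mul_le_mul_of_nonneg_left hvu hHpos.le)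
        _ = 2 * (H:ℝ) * u := by ring
        _ ≤ 2 * (H:ℝ) * (A/2)^(c-1) :=
            mul_le_mul_of_nonneg_left huA2 (by positivity)
    calc c * |X| ≤ c * (2 * (H:ℝ) * (A/2)^(c-1)) := mul_le_mul_of_nonneg_left hXup hc0.le
      _ = 2 * (H:ℝ) * c * (A/2)^(c-1) := by ring
  · -- final bound ≤ 1/2
    have hAinv : A^(c-1) ≤ (4*(H:ℝ))⁻¹ := by
      rw [show c-1 = -(1-c) by ring, Real.rpow_neg hApos.le]
      have h4Hpos : (0:ℝ) < 4 * H := by positivity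
      have hApow1c : (0:ℝ) < A ^ (1-c) := Real.rpow_pos_of_pos hApos _
      exact inv_anti₀ h4Hpos hA1c
    have hlog21 : Real.log 2 ≤ 1 := by
      have := Real.log_le_sub_one_of_pos (by norm_num : (0:ℝ) < 2); linarith
    have hc2 : c ≤ (2:ℝ)^(c-1) := by
      have hlogc : Real.log c ≤ c - 1 := Real.log_le_sub_one_of_pos hc0
      have h2 : c - 1 ≤ (c-1) * Real.log 2 := by
        linarith [mul_nonneg (by linarith : (0:ℝ) ≤ 1-c)
          (by linarith : (0:ℝ) ≤ 1 - Real.log 2)]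
      calc c = Real.exp (Real.log c) := (Real.exp_log hc0).symm
        _ ≤ Real.exp (Real.log 2 * (c-1)) := by
            apply Real.exp_le_exp.mpr; linarith
        _ = (2:ℝ)^(c-1) := (Real.rpow_def_of_pos (by norm_num) _).symm
    have h2pow : (2:ℝ)^(c-1) * (2:ℝ)^(1-c) = 1 := by
      rw [← Real.rpow_add (by norm_num : (0:ℝ) < 2)]; norm_num
    have h2p : (0:ℝ) < (2:ℝ)^(1-c) := Real.rpow_pos_of_pos (by norm_num) _
    calc 2 * (H:ℝ) * c * ((A/2)^(c-1)) = 2*(H:ℝ)*c*((2:ℝ)^(1-c)*A^(c-1)) := by rw [hhalf]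
      _ ≤ 2*(H:ℝ)*c*((2:ℝ)^(1-c)*(4*(H:ℝ))⁻¹) := by
          apply mul_le_mul_of_nonneg_left (mul_le_mul_of_nonneg_left hAinv h2p.le)
          positivity
      _ = c * (2:ℝ)^(1-c) / 2 := by field_simp; ring
      _ ≤ (2:ℝ)^(c-1) * (2:ℝ)^(1-c) / 2 := by
          have := mul_le_mul_of_nonneg_right hc2 h2p.le
          linarith
      _ = 1/2 := by rw [h2pow]
end
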